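/- arXiv:2511.22588 — 4 statements merged into one kernel-verified Lean document; each statement's English description precedes it below -/
import Mathlib

section
/- Two words u and v over the same ordered alphabet A are conjugate (i.e., u = st and v = ts for some words s, t) if and only if bwt_A(u) = bwt_A(v). -/
/-- `wordPow u p` is the `p`-fold concatenation `u^p`. -/
def wordPow {A : Type*} (u : List A) : ℕ → List A
  | 0 => []
  | n + 1 => u ++ wordPow u n

/-- A word is primitive if it is not a proper integer power of another word. -/
def Primitive {A : Type*} (w : List A) : Prop :=
  ∀ (v : List A) (m : ℕ), w = wordPow v m → m = 1

/-- The Burrows–Wheeler transform of a word: the last letters of its cyclic rotations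
listed in non-decreasing lexicographic order. -/
def bwt {A : Type*} [LinearOrder A] (w : List A) : List A :=
  (Multiset.sort
    (((List.range w.length).map (fun i => w.rotate i) : List (List A)) : Multiset (List A)) (· ≤ ·)).filterMap
    List.getLast?

/-- `w` is `π`-clustering: its BWT is `π(a₁)^{k₁} ⋯ π(a_k)^{k_k}` where `a₁ < … < a_k`
enumerates the alphabet and `k_i` is the number of occurrences of `π(a_i)` in `w`. -/
def Clustering {A : Type*} [LinearOrder A] [Fintype A] (π : Equiv.Perm A) (w : List A) : Prop :=
  bwt w =
    ((Finset.univ.sort (· ≤ ·)).map (fun a => List.replicate (w.count (π a)) (π a))).flatten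

/-!
The BWT of `w` is a function of the multiset of rotations of `w`, and conversely it determines
that multiset. Rotating right by one permutes the rotations and moves the last letter to the
front, while truncation to `k` letters is monotone for the lexicographic order; hence prepending
the BWT, letter by letter, to the sorted list of length-`k` prefixes of the rotations and
re-sorting gives the sorted list of length-`(k+1)` prefixes. Starting from `k = 0` and iterating
`|w|` times rebuilds the sorted rotations from the BWT alone. Finally, two words have the same
multiset of rotations exactly when each is a rotation of the other, i.e. when they are conjugate.
-/

open List

namespace List

variable {A : Type*}

lemma take_succ_rotate_length_sub_one {r : List A} {k : ℕ} (hk : k < r.length) {a : A}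
    (ha : r.getLast? = some a) : (r.rotate (r.length - 1)).take (k + 1) = a :: r.take k := by
  obtain ⟨l, rfl⟩ : ∃ l, r = l ++ [a] := ⟨r.dropLast, (dropLast_append_getLast? a ha).symm⟩
  rw [length_append, length_singleton, Nat.add_sub_cancel, rotate_append_length_eq,
    singleton_append, take_succ_cons, take_append_of_le_length (by simpa using hk)]

lemma zipWith_cons_filterMap_getLast? {n k : ℕ} (hk : k < n) :
    ∀ M : List (List A), (∀ r ∈ M, r.length = n) →
      zipWith cons (M.filterMap getLast?) (M.map (take k))
        = M.map fun r => (r.rotate (n - 1)).take (k + 1)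
  | [], _ => rfl
  | r :: M, hM => by
    have hr : r.length = n := hM r mem_cons_self
    rw [filterMap_cons_some (getLast?_eq_some_getLast (ne_nil_of_length_pos (by omega))),
      map_cons, map_cons, zipWith_cons_cons,
      zipWith_cons_filterMap_getLast? hk M fun s hs => hM s (mem_cons_of_mem r hs),
      ← take_succ_rotate_length_sub_one (hr ▸ hk) (getLast?_eq_some_getLast _), hr]

lemma isRotated_iff_exists_append {u v : List A} :
    u ~r v ↔ ∃ s t : List A, u = s ++ t ∧ v = t ++ s := by
  refine ⟨fun ⟨n, hn⟩ => ?_, fun ⟨s, t, hu, hv⟩ => hu ▸ hv ▸ isRotated_append⟩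
  refine ⟨u.take (n % u.length), u.drop (n % u.length), (take_append_drop _ _).symm, ?_⟩
  rw [← hn, rotate_eq_drop_append_take_mod]

lemma lt_of_take_lt_take [LinearOrder A] : ∀ {x y : List A} {k : ℕ}, x.take k < y.take k → x < y
  | [], [], _, h => by simp at h
  | [], _ :: _, _, _ => Lex.nil
  | _ :: _, [], _, h => by simp at h
  | _ :: _, _ :: _, 0, h => by simp at h
  | _ :: _, _ :: _, k + 1, h => by
    simp only [take_succ_cons] at h
    cases h with
    | cons h => exact Lex.cons (lt_of_take_lt_take h)
    | rel h => exact Lex.rel h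

lemma monotone_take [LinearOrder A] (k : ℕ) : Monotone (take k : List A → List A) :=
  fun _ _ h => not_lt.1 fun hlt => not_lt.2 h (lt_of_take_lt_take hlt)

end List

lemma Multiset.sort_map_of_monotone {α β : Type*} [LinearOrder α] [LinearOrder β] {f : α → β}
    (hf : Monotone f) (s : Multiset α) :
    (s.map f).sort (· ≤ ·) = (s.sort (· ≤ ·)).map f := by
  conv_lhs => rw [← Multiset.sort_eq s (· ≤ ·), Multiset.map_coe, Multiset.coe_sort]
  exact mergeSort_eq_self _ ((Multiset.pairwise_sort _ _).map f fun _ _ h => hf h)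

section Rotations

variable {A : Type*}

-- Unlike `cyclicPermutations`, which sends `[]` to `[[]]`, this is empty for the empty word.
def rotations (w : List A) : Multiset (List A) :=
  ((range w.length).map w.rotate : List (List A))

@[simp]
lemma rotations_nil : rotations ([] : List A) = 0 := rfl

lemma card_rotations (w : List A) : Multiset.card (rotations w) = w.length := by
  simp [rotations]

lemma rotations_eq_zero_iff {w : List A} : rotations w = 0 ↔ w = [] := by
  rw [← Multiset.card_eq_zero, card_rotations, length_eq_zero_iff]

lemma rotations_of_ne_nil {w : List A} (hw : w ≠ []) :
    rotations w = (w.cyclicPermutations : Multiset (List A)) := by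
  unfold rotations
  congr 1
  refine ext_getElem ?_ fun i _ _ => ?_
  · simp [length_cyclicPermutations_of_ne_nil _ hw]
  · simp

lemma ne_nil_of_mem_rotations {w r : List A} (h : r ∈ rotations w) : r ≠ [] := by
  obtain ⟨i, hi, rfl⟩ := List.mem_map.1 (Multiset.mem_coe.1 h)
  exact mt rotate_eq_nil_iff.1 (ne_nil_of_length_pos (by simp at hi; omega))

lemma length_of_mem_rotations {w r : List A} (h : r ∈ rotations w) : r.length = w.length := by
  obtain ⟨i, -, rfl⟩ := List.mem_map.1 (Multiset.mem_coe.1 h)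
  exact length_rotate w i

lemma rotations_rotate (w : List A) (n : ℕ) : rotations (w.rotate n) = rotations w := by
  rcases eq_or_ne w [] with rfl | hw
  · simp
  · rw [rotations_of_ne_nil hw, rotations_of_ne_nil (mt rotate_eq_nil_iff.1 hw),
      cyclicPermutations_rotate, Multiset.coe_eq_coe]
    exact rotate_perm _ _

lemma map_rotate_rotations (w : List A) (n : ℕ) :
    (rotations w).map (·.rotate n) = rotations w := by
  conv_rhs => rw [← rotations_rotate w n]
  simp only [rotations, Multiset.map_coe, List.map_map, length_rotate]
  congr 1
  refine List.map_congr_left fun i _ => ?_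
  simp [rotate_rotate, Nat.add_comm]

lemma rotations_eq_rotations_iff {u v : List A} : rotations u = rotations v ↔ u ~r v := by
  refine ⟨fun h => ?_, fun ⟨n, hn⟩ => hn ▸ (rotations_rotate u n).symm⟩
  rcases eq_or_ne u [] with rfl | hu
  · rw [rotations_nil, eq_comm, rotations_eq_zero_iff] at h
    exact h ▸ IsRotated.refl _
  · have hv : v ≠ [] := fun hv => hu (rotations_eq_zero_iff.1 (by simpa [hv] using h))
    rw [rotations_of_ne_nil hu, rotations_of_ne_nil hv, Multiset.coe_eq_coe] at h
    exact mem_cyclicPermutations_iff.1 (h.subset (mem_cyclicPermutations_self u))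

end Rotations

section BWT

variable {A : Type*} [LinearOrder A]

lemma bwt_eq_filterMap_sort (w : List A) :
    bwt w = ((rotations w).sort (· ≤ ·)).filterMap getLast? := rfl

lemma length_bwt (w : List A) : (bwt w).length = w.length := by
  rw [bwt_eq_filterMap_sort, length_filterMap_eq_countP, countP_eq_length.2, Multiset.length_sort,
    card_rotations]
  intro r hr
  simp [getLast?_eq_some_getLast (ne_nil_of_mem_rotations ((Multiset.mem_sort _).1 hr))]

lemma sort_map_take_succ_rotations {w : List A} {k : ℕ} (hk : k < w.length) :
    ((rotations w).map (take (k + 1))).sort (· ≤ ·) =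
      (zipWith cons (bwt w) (((rotations w).map (take k)).sort (· ≤ ·)) : Multiset (List A)).sort
        (· ≤ ·) := by
  conv_lhs => rw [← map_rotate_rotations w (w.length - 1), Multiset.map_map]
  rw [Multiset.sort_map_of_monotone (monotone_take k), bwt_eq_filterMap_sort,
    zipWith_cons_filterMap_getLast? hk _ fun r hr =>
      length_of_mem_rotations ((Multiset.mem_sort _).1 hr),
    ← Multiset.map_coe, Multiset.sort_eq]
  rfl

-- The classical inversion of the BWT by repeated prepending and sorting.
def bwtPrefixes (L : List A) : ℕ → List (List A)
  | 0 => replicate L.length []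
  | k + 1 => (zipWith cons L (bwtPrefixes L k) : Multiset (List A)).sort (· ≤ ·)

lemma bwtPrefixes_bwt {w : List A} {k : ℕ} (hk : k ≤ w.length) :
    bwtPrefixes (bwt w) k = ((rotations w).map (take k)).sort (· ≤ ·) := by
  induction k with
  | zero =>
    rw [Multiset.sort_map_of_monotone (monotone_take 0), bwtPrefixes, length_bwt]
    refine (eq_replicate_iff.2 ⟨?_, fun r hr => ?_⟩).symm
    · rw [length_map, Multiset.length_sort, card_rotations]
    · obtain ⟨r, -, rfl⟩ := mem_map.1 hr
      exact take_zero
  | succ k ih =>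
    rw [sort_map_take_succ_rotations hk, ← ih (by omega)]
    rfl

lemma sort_rotations_eq_bwtPrefixes (w : List A) :
    (rotations w).sort (· ≤ ·) = bwtPrefixes (bwt w) (bwt w).length := by
  rw [length_bwt, bwtPrefixes_bwt le_rfl]
  congr 1
  conv_lhs => rw [← Multiset.map_id (rotations w)]
  refine Multiset.map_congr rfl fun r hr => ?_
  exact (take_of_length_le (length_of_mem_rotations hr).le).symm

lemma bwt_eq_bwt_iff {u v : List A} : bwt u = bwt v ↔ rotations u = rotations v := by
  refine ⟨fun h => ?_, fun h => by rw [bwt_eq_filterMap_sort, h, bwt_eq_filterMap_sort]⟩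
  rw [← Multiset.sort_eq (rotations u) (· ≤ ·), ← Multiset.sort_eq (rotations v) (· ≤ ·),
    sort_rotations_eq_bwtPrefixes, sort_rotations_eq_bwtPrefixes, h]

end BWT

/-- Two words over the same ordered alphabet are conjugate if and only if they have the
same Burrows–Wheeler transform. -/
theorem bwt_eq_iff_conjugate {A : Type*} [LinearOrder A] (u v : List A) :
    (∃ s t : List A, u = s ++ t ∧ v = t ++ s) ↔ bwt u = bwt v := by
  rw [bwt_eq_bwt_iff, rotations_eq_rotations_iff, isRotated_iff_exists_append]
end

section
/- Let T be a k-IET (k ≥ 2) on I = [ℓ, r) over the ordered alphabet A = {a_1 < … < a_k} with permutation π, and suppose |I_{a_k}| = |I_{π(a_k)}| and π(a_k) ≠ a_k. Let I' = [ℓ, r − |I_{a_k}|), A' = A \ {a_k}, and define T' : I' → I' by T'(x) = T²(x) if x ∈ I_{π(a_k)} and T'(x) = T(x) otherwise. Then: (1) T' is the first-return map of T to I'; (2) T' is a (k−1)-IET on I' with partition (I_a)_{a ∈ A'} and permutation π' of A' given by π'(a) = π(a_k) if a = π⁻¹(a_k) and π'(a) = π(a) otherwise; (3) for all x ∈ I',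 Ω_T(x) = φ(Ω_{T'}(x)), where φ is the monoid morphism on infinite words with φ(π(a_k)) = π(a_k) a_k and φ(c) = c for every letter c ≠ π(a_k). -/
/-- An interval exchange transformation on `[l, l + Σ len a)` over the ordered alphabet `A`,
with subinterval lengths `len` and permutation `perm`. -/
structure IET (A : Type*) [Fintype A] [LinearOrder A] where
  l : ℝ
  len : A → ℝ
  len_pos : ∀ a, 0 < len a
  perm : Equiv.Perm A

namespace IET

variable {A : Type*} [Fintype A] [LinearOrder A] (T : IET A)

/-- Right endpoint of the domain interval. -/
def right : ℝ := T.l + ∑ a, T.len a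

/-- The domain `[ℓ, r)` of the IET. -/
def domain : Set ℝ := Set.Ico T.l T.right

/-- Left endpoint of the subinterval indexed by `a`. -/
def leftEnd (a : A) : ℝ := T.l + ∑ b ∈ Finset.univ.filter (· < a), T.len b

/-- The subinterval `I_a`. -/
def seg (a : A) : Set ℝ := Set.Ico (T.leftEnd a) (T.leftEnd a + T.len a)

/-- Translation amount on `I_a`. -/
def τ (a : A) : ℝ :=
  (∑ b ∈ Finset.univ.filter (fun b => T.perm.symm b < T.perm.symm a), T.len b)
    - (∑ b ∈ Finset.univ.filter (· < a), T.len b)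

open scoped Classical in
/-- The interval exchange transformation as a map `ℝ → ℝ` (identity off the domain). -/
noncomputable def map (x : ℝ) : ℝ :=
  if h : ∃ a, x ∈ T.seg a then x + T.τ h.choose else x

/-- The inverse transformation. -/
noncomputable def inv : ℝ → ℝ := Function.invFun T.map

open scoped Classical in
/-- The letter of the subinterval containing `x`. -/
noncomputable def idx [Nonempty A] (x : ℝ) : A :=
  if h : ∃ a, x ∈ T.seg a then h.choose else Classical.arbitrary A

/-- The trajectory (natural coding) `Ω_T(x)` of `x`. -/
noncomputable def traj [Nonempty A] (x : ℝ) (n : ℕ) : A := T.idx (T.map^[n] x)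

/-- The language of the IET: all finite factors of all trajectories. -/
def lang [Nonempty A] : Set (List A) :=
  { v | ∃ x ∈ T.domain, ∃ i : ℕ, v = (List.range v.length).map (fun j => T.traj x (i + j)) }

/-- The cylinder `I_w` of a word `w`. -/
def cyl (w : List A) : Set ℝ :=
  { x | ∀ i : Fin w.length, T.map^[(i : ℕ)] x ∈ T.seg (w.get i) }

/-- Formal discontinuities of `T`. -/
def D : Set ℝ := { y | (∃ a, y = T.leftEnd a) ∧ y ≠ T.l }

/-- Formal discontinuities of the inverse of `T`. -/
def Dinv : Set ℝ :=
  { y | (∃ a, y = T.l + ∑ b ∈ Finset.univ.filter (fun b => T.perm.symm b < T.perm.symm a), T.len b)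
      ∧ y ≠ T.l }

/-- `T^i` for an integer `i`. -/
noncomputable def iterZ (i : ℤ) (z : ℝ) : ℝ :=
  if 0 ≤ i then T.map^[i.toNat] z else T.inv^[(-i).toNat] z

/-- Forward return time `ρ⁺_{J,T}(z)` of `z` to the open interval `(u, v)`. -/
noncomputable def rhoPlus (u v z : ℝ) : ℕ := sInf {n : ℕ | 0 < n ∧ T.map^[n] z ∈ Set.Ioo u v}

/-- Backward return time `ρ⁻_{J,T}(z)` of `z` to the open interval `(u, v)`. -/
noncomputable def rhoMinus (u v z : ℝ) : ℕ := sInf {n : ℕ | T.inv^[n] z ∈ Set.Ioo u v}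

/-- The set `N_{J,T}(z)` for `J = [u, v)`. -/
noncomputable def Nset (u v z : ℝ) : Set ℝ :=
  { y | ∃ i : ℤ, -(T.rhoMinus u v z : ℤ) ≤ i ∧ i ≤ (T.rhoPlus u v z : ℤ) - 1 ∧ y = T.iterZ i z }

/-- The set `Div(J, T)` for `J = [u, v)`. -/
noncomputable def Div (u v : ℝ) : Set ℝ := ⋃ γ ∈ T.D, T.Nset u v γ

/-- The interval `[u, v)` is admissible for `T`. -/
noncomputable def Admissible (u v : ℝ) : Prop :=
  u ∈ T.Div u v ∪ {T.right} ∧ v ∈ T.Div u v ∪ {T.right}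

/-- Keane's regularity condition: the forward orbits of the formal discontinuities are
infinite and pairwise disjoint. -/
def Regular : Prop :=
  ∀ γ ∈ T.D, ∀ γ' ∈ T.D, ∀ m n : ℕ, T.map^[m] γ = T.map^[n] γ' → γ = γ' ∧ m = n

end IET

-- ## Auxiliary lemmas

namespace IET

variable {A : Type*} [Fintype A] [LinearOrder A] (T : IET A)

lemma leftEnd_add_len_le {a b : A} (h : a < b) : T.leftEnd a + T.len a ≤ T.leftEnd b := by
  unfold leftEnd
  have hsub : insert a (Finset.univ.filter (· < a)) ⊆ Finset.univ.filter (· < b) := by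
    intro c hc
    simp only [Finset.mem_insert, Finset.mem_filter, Finset.mem_univ, true_and] at *
    rcases hc with rfl | hc
    · exact h
    · exact hc.trans h
  have h2 := Finset.sum_le_sum_of_subset_of_nonneg hsub
    (fun c _ _ => (T.len_pos c).le) (f := T.len)
  rw [Finset.sum_insert (by simp)] at h2
  linarith

lemma eq_of_mem_seg {x : ℝ} {a b : A} (ha : x ∈ T.seg a) (hb : x ∈ T.seg b) : a = b := by
  by_contra hne
  rcases lt_or_gt_of_ne hne with h | h
  · have := T.leftEnd_add_len_le h
    obtain ⟨_, h2⟩ := ha; obtain ⟨h3, _⟩ := hb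
    linarith
  · have := T.leftEnd_add_len_le h
    obtain ⟨h3, _⟩ := ha; obtain ⟨_, h2⟩ := hb
    linarith

lemma map_eq {x : ℝ} {a : A} (ha : x ∈ T.seg a) : T.map x = x + T.τ a := by
  have h : ∃ c, x ∈ T.seg c := ⟨a, ha⟩
  rw [map, dif_pos h, T.eq_of_mem_seg h.choose_spec ha]

lemma idx_eq [Nonempty A] {x : ℝ} {a : A} (ha : x ∈ T.seg a) : T.idx x = a := by
  have h : ∃ c, x ∈ T.seg c := ⟨a, ha⟩
  rw [idx, dif_pos h]
  exact T.eq_of_mem_seg h.choose_spec ha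

lemma exists_seg {x : ℝ} (hx : x ∈ T.domain) : ∃ a, x ∈ T.seg a := by
  obtain ⟨hx1, hx2⟩ := hx
  have hA : Nonempty A := by
    by_contra h
    rw [not_nonempty_iff] at h
    rw [right] at hx2
    rw [Finset.univ_eq_empty, Finset.sum_empty] at hx2
    linarith
  have hune : (Finset.univ : Finset A).Nonempty := Finset.univ_nonempty
  set s := Finset.univ.filter (fun a => T.leftEnd a ≤ x) with hs
  have hs_ne : s.Nonempty := by
    refine ⟨Finset.univ.min' hune, ?_⟩
    simp only [hs, Finset.mem_filter, Finset.mem_univ, true_and]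
    have : Finset.univ.filter (· < Finset.univ.min' hune) = ∅ := by
      refine Finset.filter_eq_empty_iff.2 (fun c _ hc => ?_)
      exact absurd (Finset.min'_le _ c (Finset.mem_univ c)) (not_le.2 hc)
    rw [leftEnd, this, Finset.sum_empty]
    linarith
  set a := s.max' hs_ne with ha
  have ha_mem : T.leftEnd a ≤ x := by
    have := s.max'_mem hs_ne
    simp only [hs, Finset.mem_filter] at this
    exact this.2
  refine ⟨a, ha_mem, ?_⟩
  by_contra hge
  push_neg at hge
  set t := Finset.univ.filter (fun b => a < b) with ht
  rcases t.eq_empty_or_nonempty with hte | htne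
  · -- a is the top element
    have huniv : (Finset.univ : Finset A) = insert a (Finset.univ.filter (· < a)) := by
      ext c
      simp only [Finset.mem_insert, Finset.mem_filter, Finset.mem_univ, true_and, true_iff]
      rcases lt_trichotomy c a with h | h | h
      · exact Or.inr h
      · exact Or.inl h
      · exfalso
        have : c ∈ t := by simp [ht, h]
        rw [hte] at this; exact absurd this (Finset.notMem_empty c)
    have hsum : ∑ c, T.len c = ∑ c ∈ insert a (Finset.univ.filter (· < a)), T.len c :=
      Finset.sum_congr huniv (fun _ _ => rfl)
    rw [Finset.sum_insert (by simp)] at hsum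
    have : T.right = T.leftEnd a + T.len a := by
      rw [right, leftEnd, hsum]; ring
    linarith
  · set b := t.min' htne with hb
    have hab : a < b := by
      have := t.min'_mem htne
      simp only [ht, Finset.mem_filter] at this
      exact this.2
    have hfilter : Finset.univ.filter (· < b) = insert a (Finset.univ.filter (· < a)) := by
      ext c
      simp only [Finset.mem_insert, Finset.mem_filter, Finset.mem_univ, true_and]
      constructor
      · intro hc
        rcases lt_trichotomy c a with h | h | h
        · exact Or.inr h
        · exact Or.inl h
        · exfalso
          have : c ∈ t := by simp [ht, h]
          exact absurd hc (not_lt.2 (t.min'_le c this))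
      · rintro (rfl | hc)
        · exact hab
        · exact hc.trans hab
    have hleb : T.leftEnd b = T.leftEnd a + T.len a := by
      rw [leftEnd, leftEnd, hfilter, Finset.sum_insert (by simp)]
      ring
    have : b ∈ s := by
      simp only [hs, Finset.mem_filter, Finset.mem_univ, true_and]
      linarith
    exact absurd (s.le_max' b this) (not_le.2 hab)

lemma map_mem_img {x : ℝ} {a : A} (ha : x ∈ T.seg a) :
    T.map x ∈ Set.Ico
      (T.l + ∑ b ∈ Finset.univ.filter (fun b => T.perm.symm b < T.perm.symm a), T.len b)
      (T.l + (∑ b ∈ Finset.univ.filter (fun b => T.perm.symm b < T.perm.symm a), T.len b)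
        + T.len a) := by
  rw [T.map_eq ha]
  obtain ⟨h1, h2⟩ := ha
  rw [leftEnd] at h1 h2
  rw [τ]
  rw [Set.mem_Ico]
  constructor <;> linarith

lemma map_mem_domain {x : ℝ} (hx : x ∈ T.domain) : T.map x ∈ T.domain := by
  obtain ⟨a, ha⟩ := T.exists_seg hx
  obtain ⟨h1, h2⟩ := T.map_mem_img ha
  have hnn : (0:ℝ) ≤ ∑ b ∈ Finset.univ.filter (fun b => T.perm.symm b < T.perm.symm a), T.len b :=
    Finset.sum_nonneg (fun b _ => (T.len_pos b).le)
  have hle : (∑ b ∈ Finset.univ.filter (fun b => T.perm.symm b < T.perm.symm a), T.len b)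
      + T.len a ≤ ∑ b, T.len b := by
    have hsub : insert a (Finset.univ.filter (fun b => T.perm.symm b < T.perm.symm a))
        ⊆ Finset.univ := fun c _ => Finset.mem_univ c
    have h2 := Finset.sum_le_sum_of_subset_of_nonneg hsub
      (fun c _ _ => (T.len_pos c).le) (f := T.len)
    rw [Finset.sum_insert (by simp)] at h2
    linarith
  constructor
  · linarith
  · rw [right]; linarith


lemma mem_seg_idx [Nonempty A] {x : ℝ} (hx : x ∈ T.domain) : x ∈ T.seg (T.idx x) := by
  obtain ⟨a, ha⟩ := T.exists_seg hx
  rw [T.idx_eq ha]; exact ha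

variable {n : ℕ}

lemma symm_ne_last (p : Equiv.Perm (Fin (n+2))) (h : p (Fin.last (n+1)) ≠ Fin.last (n+1)) :
    p.symm (Fin.last (n+1)) ≠ Fin.last (n+1) := by
  intro hc
  exact h ((Equiv.symm_apply_eq p).mp hc).symm

/-- The induced permutation on `Fin (n+1)`. -/
noncomputable def permAux (p : Equiv.Perm (Fin (n+2))) (h : p (Fin.last (n+1)) ≠ Fin.last (n+1)) :
    Equiv.Perm (Fin (n+1)) where
  toFun a :=
    if ha : a.castSucc = p.symm (Fin.last (n+1)) then (p (Fin.last (n+1))).castPred h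
    else (p a.castSucc).castPred (fun hc => ha ((Equiv.eq_symm_apply p).mpr hc))
  invFun b :=
    if hb : b.castSucc = p (Fin.last (n+1)) then
      (p.symm (Fin.last (n+1))).castPred (symm_ne_last p h)
    else (p.symm b.castSucc).castPred
      (fun hc => hb (by rw [← (Equiv.symm_apply_eq p).mp hc]))
  left_inv a := by
    dsimp only
    by_cases ha : a.castSucc = p.symm (Fin.last (n+1))
    · rw [dif_pos ha, dif_pos (by rw [Fin.castSucc_castPred])]
      apply Fin.castSucc_injective
      rw [Fin.castSucc_castPred, ha]
    · rw [dif_neg ha, dif_neg (by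
        rw [Fin.castSucc_castPred]
        intro hc
        exact absurd (p.injective hc) (Fin.castSucc_lt_last a).ne)]
      apply Fin.castSucc_injective
      rw [Fin.castSucc_castPred, Fin.castSucc_castPred, Equiv.symm_apply_apply]
  right_inv b := by
    dsimp only
    by_cases hb : b.castSucc = p (Fin.last (n+1))
    · rw [dif_pos hb, dif_pos (by rw [Fin.castSucc_castPred])]
      apply Fin.castSucc_injective
      rw [Fin.castSucc_castPred, hb]
    · rw [dif_neg hb, dif_neg (by
        rw [Fin.castSucc_castPred]
        intro hc
        exact absurd (p.symm.injective hc) (Fin.castSucc_lt_last b).ne)]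
      apply Fin.castSucc_injective
      rw [Fin.castSucc_castPred, Fin.castSucc_castPred, Equiv.apply_symm_apply]

lemma permAux_spec (p : Equiv.Perm (Fin (n+2))) (h : p (Fin.last (n+1)) ≠ Fin.last (n+1))
    (a : Fin (n+1)) :
    (permAux p h a).castSucc =
      (if a.castSucc = p.symm (Fin.last (n+1)) then p (Fin.last (n+1)) else p a.castSucc) := by
  by_cases ha : a.castSucc = p.symm (Fin.last (n+1))
  · rw [if_pos ha]
    show ((if _ : _ then _ else _ : Fin (n+1))).castSucc = _
    rw [dif_pos ha, Fin.castSucc_castPred]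
  · rw [if_neg ha]
    show ((if _ : _ then _ else _ : Fin (n+1))).castSucc = _
    rw [dif_neg ha, Fin.castSucc_castPred]

lemma permAux_symm_spec (p : Equiv.Perm (Fin (n+2))) (h : p (Fin.last (n+1)) ≠ Fin.last (n+1))
    (b : Fin (n+1)) :
    ((permAux p h).symm b).castSucc =
      (if b.castSucc = p (Fin.last (n+1)) then p.symm (Fin.last (n+1)) else p.symm b.castSucc) := by
  by_cases hb : b.castSucc = p (Fin.last (n+1))
  · rw [if_pos hb]
    show ((if _ : _ then _ else _ : Fin (n+1))).castSucc = _
    rw [dif_pos hb, Fin.castSucc_castPred]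
  · rw [if_neg hb]
    show ((if _ : _ then _ else _ : Fin (n+1))).castSucc = _
    rw [dif_neg hb, Fin.castSucc_castPred]

lemma sum_filter_castSucc (f : Fin (n+2) → ℝ) (P : Fin (n+2) → Prop) [DecidablePred P]
    (hP : ¬ P (Fin.last (n+1))) :
    ∑ b ∈ Finset.univ.filter (fun b : Fin (n+1) => P b.castSucc), f b.castSucc
      = ∑ b ∈ Finset.univ.filter P, f b := by
  rw [Finset.sum_filter, Finset.sum_filter,
    Fin.sum_univ_castSucc (f := fun b => if P b then f b else 0), if_neg hP, add_zero]


lemma key_sum (T : IET (Fin (n+2)))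
    (hlen : T.len (Fin.last (n+1)) = T.len (T.perm (Fin.last (n+1))))
    (hne : T.perm (Fin.last (n+1)) ≠ Fin.last (n+1)) (C : Fin (n+2)) :
    ∑ b ∈ Finset.univ.filter (fun b : Fin (n+1) =>
        (if b.castSucc = T.perm (Fin.last (n+1)) then T.perm.symm (Fin.last (n+1))
         else T.perm.symm b.castSucc) < C), T.len b.castSucc
      = ∑ B ∈ Finset.univ.filter (fun B => T.perm.symm B < C), T.len B := by
  classical
  set K := Fin.last (n+1) with hK
  set p := T.perm with hp
  set b₀ : Fin (n+1) := (p K).castPred hne with hb₀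
  have hb₀c : b₀.castSucc = p K := Fin.castSucc_castPred _ _
  rw [Finset.sum_filter, Finset.sum_filter]
  rw [Fin.sum_univ_castSucc (f := fun B => if p.symm B < C then T.len B else 0)]
  rw [← Finset.add_sum_erase _
      (fun b : Fin (n+1) => if (if b.castSucc = p K then p.symm K else p.symm b.castSucc) < C
        then T.len b.castSucc else 0) (Finset.mem_univ b₀),
      ← Finset.add_sum_erase _
      (fun b : Fin (n+1) => if p.symm b.castSucc < C then T.len b.castSucc else 0)
      (Finset.mem_univ b₀)]
  have hcongr : ∑ b ∈ Finset.univ.erase b₀,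
        (if (if b.castSucc = p K then p.symm K else p.symm b.castSucc) < C
          then T.len b.castSucc else 0)
      = ∑ b ∈ Finset.univ.erase b₀, (if p.symm b.castSucc < C then T.len b.castSucc else 0) := by
    refine Finset.sum_congr rfl (fun b hb => ?_)
    have hbne : b.castSucc ≠ p K := by
      intro hc
      exact (Finset.mem_erase.1 hb).1 (Fin.castSucc_injective _ (by rw [hc, hb₀c]))
    rw [if_neg hbne]
  rw [hcongr, hb₀c, if_pos rfl, Equiv.symm_apply_apply]
  have hKC : ¬ (K < C) := not_lt.2 (Fin.le_last C)
  by_cases hpc : p.symm K < C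
  · rw [if_pos hpc, if_pos hpc, if_neg hKC, ← hlen]; ring
  · rw [if_neg hpc, if_neg hpc, if_neg hKC]; ring

lemma sum_lt_castSucc (T : IET (Fin (n+2))) (a : Fin (n+1)) :
    ∑ b ∈ Finset.univ.filter (fun b : Fin (n+1) => b < a), T.len b.castSucc
      = ∑ B ∈ Finset.univ.filter (· < a.castSucc), T.len B := by
  classical
  have h1 : Finset.univ.filter (fun b : Fin (n+1) => b < a)
      = Finset.univ.filter (fun b : Fin (n+1) => b.castSucc < a.castSucc) := by
    simp [Fin.castSucc_lt_castSucc_iff]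
  rw [h1, sum_filter_castSucc T.len (fun B => B < a.castSucc) (not_lt.2 (Fin.le_last a.castSucc))]

lemma cancel_sum (T : IET (Fin (n+2)))
    (hlen : T.len (Fin.last (n+1)) = T.len (T.perm (Fin.last (n+1)))) :
    ∑ B ∈ Finset.univ.filter (fun B => T.perm.symm B < Fin.last (n+1)), T.len B
      = ∑ B ∈ Finset.univ.filter (· < Fin.last (n+1)), T.len B := by
  classical
  have h1 : Finset.univ.filter (fun B : Fin (n+2) => T.perm.symm B < Fin.last (n+1))
      = Finset.univ.erase (T.perm (Fin.last (n+1))) := by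
    ext B
    simp only [Finset.mem_filter, Finset.mem_univ, true_and, Finset.mem_erase, and_true]
    rw [(Fin.le_last (T.perm.symm B)).lt_iff_ne]
    constructor
    · intro hB hc; exact hB (by rw [hc, Equiv.symm_apply_apply])
    · intro hB hc; exact hB ((Equiv.symm_apply_eq T.perm).mp hc)
  have h2 : Finset.univ.filter (fun B : Fin (n+2) => B < Fin.last (n+1))
      = Finset.univ.erase (Fin.last (n+1)) := by
    ext B
    simp only [Finset.mem_filter, Finset.mem_univ, true_and, Finset.mem_erase, and_true]
    exact (Fin.le_last B).lt_iff_ne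
  rw [h1, h2, Finset.sum_erase_eq_sub (Finset.mem_univ _),
    Finset.sum_erase_eq_sub (Finset.mem_univ _), hlen]

/-- The merged `(k-1)`-IET. -/
noncomputable def merge (T : IET (Fin (n+2)))
    (hne : T.perm (Fin.last (n+1)) ≠ Fin.last (n+1)) : IET (Fin (n+1)) where
  l := T.l
  len a := T.len a.castSucc
  len_pos a := T.len_pos _
  perm := permAux T.perm hne

variable (T : IET (Fin (n+2)))

abbrev Hlen (T : IET (Fin (n+2))) : Prop :=
  T.len (Fin.last (n+1)) = T.len (T.perm (Fin.last (n+1)))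
abbrev Hne (T : IET (Fin (n+2))) : Prop :=
  T.perm (Fin.last (n+1)) ≠ Fin.last (n+1)

lemma merge_leftEnd (hne : Hne T) (a : Fin (n+1)) : (merge T hne).leftEnd a = T.leftEnd a.castSucc := by
  unfold leftEnd merge
  rw [sum_lt_castSucc T a]

lemma merge_right (hne : Hne T) : (merge T hne).right = T.right - T.len (Fin.last (n+1)) := by
  unfold right merge
  rw [Fin.sum_univ_castSucc (f := T.len)]
  dsimp only
  ring

lemma merge_seg (hne : Hne T) (a : Fin (n+1)) : (merge T hne).seg a = T.seg a.castSucc := by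
  unfold seg
  rw [merge_leftEnd T hne]
  rfl

lemma filter_symm_lt_last :
    Finset.univ.filter (fun B : Fin (n+2) => T.perm.symm B < Fin.last (n+1))
      = Finset.univ.erase (T.perm (Fin.last (n+1))) := by
  ext B
  simp only [Finset.mem_filter, Finset.mem_univ, true_and, Finset.mem_erase, and_true]
  rw [(Fin.le_last (T.perm.symm B)).lt_iff_ne]
  constructor
  · intro hB hc; exact hB (by rw [hc, Equiv.symm_apply_apply])
  · intro hB hc; exact hB ((Equiv.symm_apply_eq T.perm).mp hc)

lemma filter_lt_last :
    Finset.univ.filter (fun B : Fin (n+2) => B < Fin.last (n+1))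
      = Finset.univ.erase (Fin.last (n+1)) := by
  ext B
  simp only [Finset.mem_filter, Finset.mem_univ, true_and, Finset.mem_erase, and_true]
  exact (Fin.le_last B).lt_iff_ne

lemma merge_tau_ne (hlen : Hlen T) (hne : Hne T) (a : Fin (n+1)) (ha : a.castSucc ≠ T.perm (Fin.last (n+1))) :
    (merge T hne).τ a = T.τ a.castSucc := by
  have hfilt : Finset.univ.filter
        (fun b : Fin (n+1) => (permAux T.perm hne).symm b < (permAux T.perm hne).symm a)
      = Finset.univ.filter (fun b : Fin (n+1) =>
        (if b.castSucc = T.perm (Fin.last (n+1)) then T.perm.symm (Fin.last (n+1))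
         else T.perm.symm b.castSucc) < T.perm.symm a.castSucc) := by
    apply Finset.filter_congr
    intro b _
    rw [← Fin.castSucc_lt_castSucc_iff]
    rw [permAux_symm_spec T.perm hne b, permAux_symm_spec T.perm hne a, if_neg ha]
  show (∑ b ∈ Finset.univ.filter
        (fun b : Fin (n+1) => (permAux T.perm hne).symm b < (permAux T.perm hne).symm a),
        T.len b.castSucc)
      - (∑ b ∈ Finset.univ.filter (fun b : Fin (n+1) => b < a), T.len b.castSucc) = _
  rw [hfilt, key_sum T hlen hne (T.perm.symm a.castSucc), sum_lt_castSucc T a, τ]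

lemma merge_tau_eq (hlen : Hlen T) (hne : Hne T) (a : Fin (n+1)) (ha : a.castSucc = T.perm (Fin.last (n+1))) :
    (merge T hne).τ a = T.τ (T.perm (Fin.last (n+1))) + T.τ (Fin.last (n+1)) := by
  have hfilt : Finset.univ.filter
        (fun b : Fin (n+1) => (permAux T.perm hne).symm b < (permAux T.perm hne).symm a)
      = Finset.univ.filter (fun b : Fin (n+1) =>
        (if b.castSucc = T.perm (Fin.last (n+1)) then T.perm.symm (Fin.last (n+1))
         else T.perm.symm b.castSucc) < T.perm.symm (Fin.last (n+1))) := by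
    apply Finset.filter_congr
    intro b _
    rw [← Fin.castSucc_lt_castSucc_iff]
    rw [permAux_symm_spec T.perm hne b, permAux_symm_spec T.perm hne a, if_pos ha]
  show (∑ b ∈ Finset.univ.filter
        (fun b : Fin (n+1) => (permAux T.perm hne).symm b < (permAux T.perm hne).symm a),
        T.len b.castSucc)
      - (∑ b ∈ Finset.univ.filter (fun b : Fin (n+1) => b < a), T.len b.castSucc) = _
  rw [hfilt, key_sum T hlen hne (T.perm.symm (Fin.last (n+1))), sum_lt_castSucc T a, ha, τ, τ,
    Equiv.symm_apply_apply, cancel_sum T hlen]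
  ring

lemma sum_filter_lt_last :
    ∑ B ∈ Finset.univ.filter (fun B : Fin (n+2) => B < Fin.last (n+1)), T.len B
      = (∑ B, T.len B) - T.len (Fin.last (n+1)) := by
  rw [filter_lt_last, Finset.sum_erase_eq_sub (Finset.mem_univ _)]

lemma segK_eq :
    T.seg (Fin.last (n+1)) = Set.Ico (T.right - T.len (Fin.last (n+1))) T.right := by
  unfold seg leftEnd right
  rw [sum_filter_lt_last T]
  congr 1 <;> ring

lemma map_pK_mem_segK (hlen : Hlen T) {x : ℝ} (hx : x ∈ T.seg (T.perm (Fin.last (n+1)))) :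
    T.map x ∈ T.seg (Fin.last (n+1)) := by
  have h := T.map_mem_img hx
  rw [Equiv.symm_apply_apply] at h
  rw [filter_symm_lt_last T, Finset.sum_erase_eq_sub (Finset.mem_univ _)] at h
  rw [segK_eq T, hlen, right]
  obtain ⟨h1, h2⟩ := h
  constructor <;> [linarith; linarith]

lemma map_ne_mem (hlen : Hlen T) {x : ℝ} {a : Fin (n+2)} (ha : a ≠ T.perm (Fin.last (n+1)))
    (hx : x ∈ T.seg a) :
    T.map x ∈ Set.Ico T.l (T.right - T.len (Fin.last (n+1))) := by
  have h := T.map_mem_img hx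
  have hnn : (0:ℝ) ≤ ∑ b ∈ Finset.univ.filter
      (fun b => T.perm.symm b < T.perm.symm a), T.len b :=
    Finset.sum_nonneg (fun b _ => (T.len_pos b).le)
  have hle : (∑ b ∈ Finset.univ.filter (fun b => T.perm.symm b < T.perm.symm a), T.len b)
      + T.len a ≤ (∑ b, T.len b) - T.len (T.perm (Fin.last (n+1))) := by
    have hsub : insert a (Finset.univ.filter (fun b => T.perm.symm b < T.perm.symm a))
        ⊆ Finset.univ.erase (T.perm (Fin.last (n+1))) := by
      intro c hc
      rcases Finset.mem_insert.1 hc with rfl | hc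
      · exact Finset.mem_erase.2 ⟨ha, Finset.mem_univ _⟩
      · refine Finset.mem_erase.2 ⟨?_, Finset.mem_univ _⟩
        simp only [Finset.mem_filter, Finset.mem_univ, true_and] at hc
        intro hcc
        rw [hcc, Equiv.symm_apply_apply] at hc
        exact absurd hc (not_lt.2 (Fin.le_last _))
    have h2 := Finset.sum_le_sum_of_subset_of_nonneg hsub
      (fun c _ _ => (T.len_pos c).le) (f := T.len)
    rw [Finset.sum_insert (by simp), Finset.sum_erase_eq_sub (Finset.mem_univ _)] at h2
    linarith
  rw [← hlen] at hle
  obtain ⟨h1, h2⟩ := h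
  rw [right]
  constructor <;> linarith

open scoped Classical in
lemma merge_map (hlen : Hlen T) (hne : Hne T) {x : ℝ} (hx : x ∈ Set.Ico T.l (T.right - T.len (Fin.last (n+1)))) :
    (merge T hne).map x
      = if x ∈ T.seg (T.perm (Fin.last (n+1))) then T.map (T.map x) else T.map x := by
  have hdom : x ∈ (merge T hne).domain := by
    rw [domain, merge_right T hne]
    exact hx
  obtain ⟨a, haseg⟩ := (merge T hne).exists_seg hdom
  have hTseg : x ∈ T.seg a.castSucc := by rw [← merge_seg T hne]; exact haseg
  by_cases hc : a.castSucc = T.perm (Fin.last (n+1))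
  · rw [if_pos (hc ▸ hTseg)]
    have h1 : T.map x = x + T.τ (T.perm (Fin.last (n+1))) := T.map_eq (hc ▸ hTseg)
    have h2 : T.map x ∈ T.seg (Fin.last (n+1)) := map_pK_mem_segK T hlen (hc ▸ hTseg)
    rw [(merge T hne).map_eq haseg, merge_tau_eq T hlen hne a hc, T.map_eq h2, h1]
    ring
  · have hnotin : x ∉ T.seg (T.perm (Fin.last (n+1))) :=
      fun hin => hc (T.eq_of_mem_seg hTseg hin)
    rw [if_neg hnotin, (merge T hne).map_eq haseg, merge_tau_ne T hlen hne a hc, T.map_eq hTseg]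


end IET


open scoped Classical in
/-- First return time of `x` to `J` under `f` (junk value `0` if it never returns). -/
noncomputable def returnTime (f : ℝ → ℝ) (J : Set ℝ) (x : ℝ) : ℕ :=
  if h : ∃ n, 0 < n ∧ f^[n] x ∈ J then Nat.find h else 0

/-- First return map of `f` to `J`. -/
noncomputable def firstReturn (f : ℝ → ℝ) (J : Set ℝ) (x : ℝ) : ℝ :=
  f^[returnTime f J x] x

/-- A finite word is a prefix of an infinite word (a sequence). -/
def SeqPrefix {α : Type*} (l : List α) (f : ℕ → α) : Prop :=
  ∀ i : Fin l.length, l.get i = f i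

open scoped Classical in
lemma returnTime_eq (f : ℝ → ℝ) (J : Set ℝ) (x : ℝ) {m : ℕ} (hm : 0 < m ∧ f^[m] x ∈ J)
    (hlt : ∀ k, k < m → ¬(0 < k ∧ f^[k] x ∈ J)) : returnTime f J x = m := by
  have hex : ∃ n, 0 < n ∧ f^[n] x ∈ J := ⟨m, hm⟩
  simp only [returnTime, dif_pos hex]
  exact (Nat.find_eq_iff hex).mpr ⟨hm, hlt⟩

open scoped Classical in
/-- Right merging step: if the last interval and its image-last interval have equal lengths,
the map induced on `[ℓ, r - |I_{a_k}|)` (doubling `T` on `I_{π(a_k)}`) is the first-return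
map of `T`, is a `(k-1)`-IET over `A' = A \ {a_k}` with the prescribed permutation, and
trajectories are related by the morphism `φ : π(a_k) ↦ π(a_k)a_k`. -/
theorem right_merging_step {n : ℕ} (T : IET (Fin (n + 2)))
    (hlen : T.len (Fin.last (n + 1)) = T.len (T.perm (Fin.last (n + 1))))
    (hne : T.perm (Fin.last (n + 1)) ≠ Fin.last (n + 1)) :
    let aK : Fin (n + 2) := Fin.last (n + 1)
    let I' : Set ℝ := Set.Ico T.l (T.right - T.len aK)
    let T' : ℝ → ℝ := fun x => if x ∈ T.seg (T.perm aK) then T.map (T.map x) else T.map x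
    -- (1) `T'` is the first-return map of `T` to `I'`
    (∀ x ∈ I', (∃ m : ℕ, 0 < m ∧ T.map^[m] x ∈ I') ∧ firstReturn T.map I' x = T' x) ∧
    -- (2) `T'` is a `(k-1)`-IET on `I'` with partition `(I_a)_{a ∈ A'}` and permutation `π'`
    (∃ S : IET (Fin (n + 1)),
      S.l = T.l ∧
      (∀ a : Fin (n + 1), S.len a = T.len a.castSucc) ∧
      (∀ a : Fin (n + 1), (S.perm a).castSucc =
          (if a.castSucc = T.perm.symm aK then T.perm aK else T.perm a.castSucc)) ∧
      (∀ x ∈ I', S.map x = T' x) ∧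
      -- (3) `Ω_T(x) = φ(Ω_{T'}(x))`
      (∀ x ∈ I', ∀ m : ℕ,
        SeqPrefix
          ((List.range m).flatMap fun i =>
            if (S.traj x i).castSucc = T.perm aK then [T.perm aK, aK]
            else [(S.traj x i).castSucc])
          (T.traj x))) := by
  intro aK I' T'
  have hsub : I' ⊆ T.domain := by
    intro y hy
    exact ⟨hy.1, lt_of_lt_of_le hy.2 (sub_le_self _ (T.len_pos aK).le)⟩
  have hsegK_disj : ∀ y ∈ T.seg aK, y ∉ I' := by
    intro y hy hyI
    rw [IET.segK_eq] at hy
    exact absurd hyI.2 (not_lt.2 hy.1)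
  have hstep : ∀ y ∈ I',
      (y ∈ T.seg (T.perm aK) → T.map y ∈ T.seg aK ∧ T.map y ∉ I' ∧ T.map (T.map y) ∈ I')
      ∧ (y ∉ T.seg (T.perm aK) → T.map y ∈ I') := by
    intro y hy
    constructor
    · intro hyp
      have h1 := IET.map_pK_mem_segK T hlen hyp
      exact ⟨h1, hsegK_disj _ h1, IET.map_ne_mem T hlen (Ne.symm hne) h1⟩
    · intro hyp
      obtain ⟨a, ha⟩ := T.exists_seg (hsub hy)
      have haK : a ≠ T.perm aK := fun h => hyp (h ▸ ha)
      exact IET.map_ne_mem T hlen haK ha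
  constructor
  · -- part (1)
    intro x hx
    rcases hstep x hx with ⟨hA, hB⟩
    by_cases hc : x ∈ T.seg (T.perm aK)
    · obtain ⟨h1, h1', h2⟩ := hA hc
      have hit2 : T.map^[2] x = T.map (T.map x) := rfl
      have hex : ∃ m, 0 < m ∧ T.map^[m] x ∈ I' := ⟨2, by norm_num, by rw [hit2]; exact h2⟩
      refine ⟨hex, ?_⟩
      have hfind : returnTime T.map I' x = 2 := by
        refine returnTime_eq _ _ _ ⟨by norm_num, by rw [hit2]; exact h2⟩ ?_
        intro m hm
        interval_cases m
        · simp
        · rintro ⟨-, hm1⟩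
          rw [Function.iterate_one] at hm1
          exact h1' hm1
      rw [firstReturn, hfind]
      show T.map^[2] x = if x ∈ T.seg (T.perm aK) then T.map (T.map x) else T.map x
      rw [if_pos hc]
      exact hit2
    · have h1 := hB hc
      have hex : ∃ m, 0 < m ∧ T.map^[m] x ∈ I' :=
        ⟨1, one_pos, by rw [Function.iterate_one]; exact h1⟩
      refine ⟨hex, ?_⟩
      have hfind : returnTime T.map I' x = 1 := by
        refine returnTime_eq _ _ _ ⟨one_pos, by rw [Function.iterate_one]; exact h1⟩ ?_
        intro m hm
        interval_cases m
        simp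
      rw [firstReturn, hfind]
      show T.map^[1] x = if x ∈ T.seg (T.perm aK) then T.map (T.map x) else T.map x
      rw [if_neg hc]
      exact Function.iterate_one T.map ▸ rfl
  · -- parts (2) and (3)
    refine ⟨IET.merge T hne, rfl, fun a => rfl, IET.permAux_spec T.perm hne,
      fun x hx => IET.merge_map T hlen hne hx, ?_⟩
    intro x hx m
    have hdomS : ∀ y ∈ I', (IET.merge T hne).map y ∈ I' := by
      intro y hy
      have hmem : y ∈ (IET.merge T hne).domain := by
        rw [IET.domain, IET.merge_right T hne]
        exact hy
      have h := (IET.merge T hne).map_mem_domain hmem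
      rw [IET.domain, IET.merge_right T hne] at h
      exact h
    have hiter : ∀ k : ℕ, (IET.merge T hne).map^[k] x ∈ I' := by
      intro k
      induction k with
      | zero => exact hx
      | succ k ih => rw [Function.iterate_succ_apply']; exact hdomS _ ih
    have key : ∀ k : ℕ,
        T.map^[((List.range k).flatMap fun i =>
          if ((IET.merge T hne).traj x i).castSucc = T.perm aK then [T.perm aK, aK]
          else [((IET.merge T hne).traj x i).castSucc]).length] x
          = (IET.merge T hne).map^[k] x
        ∧ SeqPrefix ((List.range k).flatMap fun i =>
          if ((IET.merge T hne).traj x i).castSucc = T.perm aK then [T.perm aK, aK]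
          else [((IET.merge T hne).traj x i).castSucc]) (T.traj x) := by
      intro k
      induction k with
      | zero =>
        constructor
        · simp
        · intro i
          exact absurd i.2 (by simp)
      | succ k ih =>
        obtain ⟨ih1, ih2⟩ := ih
        have hy := hiter k
        have hydom : (IET.merge T hne).map^[k] x ∈ (IET.merge T hne).domain := by
          rw [IET.domain, IET.merge_right T hne]; exact hy
        have hyc : (IET.merge T hne).map^[k] x
            ∈ (IET.merge T hne).seg ((IET.merge T hne).traj x k) :=
          (IET.merge T hne).mem_seg_idx hydom
        have hyT : (IET.merge T hne).map^[k] x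
            ∈ T.seg (((IET.merge T hne).traj x k)).castSucc := by
          rw [← IET.merge_seg T hne]; exact hyc
        have hsplit : (List.range (k+1)).flatMap (fun i =>
            if ((IET.merge T hne).traj x i).castSucc = T.perm aK then [T.perm aK, aK]
            else [((IET.merge T hne).traj x i).castSucc])
            = ((List.range k).flatMap fun i =>
            if ((IET.merge T hne).traj x i).castSucc = T.perm aK then [T.perm aK, aK]
            else [((IET.merge T hne).traj x i).castSucc])
            ++ (if ((IET.merge T hne).traj x k).castSucc = T.perm aK then [T.perm aK, aK]
            else [((IET.merge T hne).traj x k).castSucc]) := by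
          rw [List.range_succ, List.flatMap_append, List.flatMap_cons, List.flatMap_nil,
            List.append_nil]
        rw [hsplit]
        by_cases hc : ((IET.merge T hne).traj x k).castSucc = T.perm aK
        · rw [if_pos hc]
          have e1 : T.map^[((List.range k).flatMap fun i =>
              if ((IET.merge T hne).traj x i).castSucc = T.perm aK then [T.perm aK, aK]
              else [((IET.merge T hne).traj x i).castSucc]).length + 1] x
              = T.map ((IET.merge T hne).map^[k] x) := by
            rw [Function.iterate_succ_apply', ih1]
          have e2 : T.map^[((List.range k).flatMap fun i =>
              if ((IET.merge T hne).traj x i).castSucc = T.perm aK then [T.perm aK, aK]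
              else [((IET.merge T hne).traj x i).castSucc]).length + 2] x
              = T.map (T.map ((IET.merge T hne).map^[k] x)) := by
            rw [show ((List.range k).flatMap fun i =>
              if ((IET.merge T hne).traj x i).castSucc = T.perm aK then [T.perm aK, aK]
              else [((IET.merge T hne).traj x i).castSucc]).length + 2
              = (((List.range k).flatMap fun i =>
              if ((IET.merge T hne).traj x i).castSucc = T.perm aK then [T.perm aK, aK]
              else [((IET.merge T hne).traj x i).castSucc]).length + 1) + 1 from rfl,
              Function.iterate_succ_apply', e1]
          have hy1 : T.map ((IET.merge T hne).map^[k] x) ∈ T.seg aK :=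
            IET.map_pK_mem_segK T hlen (hc ▸ hyT)
          have e4 : (IET.merge T hne).map^[k+1] x
              = T.map (T.map ((IET.merge T hne).map^[k] x)) := by
            rw [Function.iterate_succ_apply', IET.merge_map T hlen hne (hiter k),
              if_pos (hc ▸ hyT)]
          have hlen2 : (((List.range k).flatMap fun i =>
              if ((IET.merge T hne).traj x i).castSucc = T.perm aK then [T.perm aK, aK]
              else [((IET.merge T hne).traj x i).castSucc]) ++ [T.perm aK, aK]).length
              = ((List.range k).flatMap fun i =>
              if ((IET.merge T hne).traj x i).castSucc = T.perm aK then [T.perm aK, aK]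
              else [((IET.merge T hne).traj x i).castSucc]).length + 2 := by
            simp
          constructor
          · rw [hlen2, e2, e4]
          · intro i
            have hi : (i : ℕ) < ((List.range k).flatMap fun i =>
                if ((IET.merge T hne).traj x i).castSucc = T.perm aK then [T.perm aK, aK]
                else [((IET.merge T hne).traj x i).castSucc]).length + 2 := by
              exact lt_of_lt_of_eq i.2 hlen2
            rw [List.get_eq_getElem]
            by_cases h1 : (i : ℕ) < ((List.range k).flatMap fun i =>
                if ((IET.merge T hne).traj x i).castSucc = T.perm aK then [T.perm aK, aK]
                else [((IET.merge T hne).traj x i).castSucc]).length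
            · rw [List.getElem_append_left h1]
              have h3 := ih2 ⟨i, h1⟩
              rw [List.get_eq_getElem] at h3
              exact h3
            · rcases (by omega : (i:ℕ) = ((List.range k).flatMap fun i =>
                  if ((IET.merge T hne).traj x i).castSucc = T.perm aK then [T.perm aK, aK]
                  else [((IET.merge T hne).traj x i).castSucc]).length
                ∨ (i:ℕ) = ((List.range k).flatMap fun i =>
                  if ((IET.merge T hne).traj x i).castSucc = T.perm aK then [T.perm aK, aK]
                  else [((IET.merge T hne).traj x i).castSucc]).length + 1) with h2 | h2
              · have hgoal : (((List.range k).flatMap fun i =>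
                    if ((IET.merge T hne).traj x i).castSucc = T.perm aK then [T.perm aK, aK]
                    else [((IET.merge T hne).traj x i).castSucc]) ++ [T.perm aK, aK])[(i:ℕ)]'(by exact lt_of_lt_of_eq hi hlen2.symm) = T.perm aK := by
                  rw [List.getElem_append_right (by omega)]
                  simp [h2]
                have htraj : T.traj x (((List.range k).flatMap fun i =>
                    if ((IET.merge T hne).traj x i).castSucc = T.perm aK then [T.perm aK, aK]
                    else [((IET.merge T hne).traj x i).castSucc]).length) = T.perm aK := by
                  show T.idx _ = _
                  rw [ih1]
                  exact T.idx_eq (hc ▸ hyT)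
                have h5 : T.traj x (i:ℕ) = T.perm aK := by rw [h2]; exact htraj
                exact hgoal.trans h5.symm
              · have hgoal : (((List.range k).flatMap fun i =>
                    if ((IET.merge T hne).traj x i).castSucc = T.perm aK then [T.perm aK, aK]
                    else [((IET.merge T hne).traj x i).castSucc]) ++ [T.perm aK, aK])[(i:ℕ)]'(by exact lt_of_lt_of_eq hi hlen2.symm) = aK := by
                  rw [List.getElem_append_right (by omega)]
                  simp [h2]
                have htraj : T.traj x (((List.range k).flatMap fun i =>
                    if ((IET.merge T hne).traj x i).castSucc = T.perm aK then [T.perm aK, aK]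
                    else [((IET.merge T hne).traj x i).castSucc]).length + 1) = aK := by
                  show T.idx _ = _
                  rw [e1]
                  exact T.idx_eq hy1
                have h5 : T.traj x (i:ℕ) = aK := by rw [h2]; exact htraj
                exact hgoal.trans h5.symm
        · rw [if_neg hc]
          have e1 : T.map^[((List.range k).flatMap fun i =>
              if ((IET.merge T hne).traj x i).castSucc = T.perm aK then [T.perm aK, aK]
              else [((IET.merge T hne).traj x i).castSucc]).length + 1] x
              = T.map ((IET.merge T hne).map^[k] x) := by
            rw [Function.iterate_succ_apply', ih1]
          have hnotin : (IET.merge T hne).map^[k] x ∉ T.seg (T.perm aK) :=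
            fun hin => hc (T.eq_of_mem_seg hyT hin)
          have e4 : (IET.merge T hne).map^[k+1] x = T.map ((IET.merge T hne).map^[k] x) := by
            rw [Function.iterate_succ_apply', IET.merge_map T hlen hne (hiter k), if_neg hnotin]
          have hlen2 : (((List.range k).flatMap fun i =>
              if ((IET.merge T hne).traj x i).castSucc = T.perm aK then [T.perm aK, aK]
              else [((IET.merge T hne).traj x i).castSucc])
              ++ [((IET.merge T hne).traj x k).castSucc]).length
              = ((List.range k).flatMap fun i =>
              if ((IET.merge T hne).traj x i).castSucc = T.perm aK then [T.perm aK, aK]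
              else [((IET.merge T hne).traj x i).castSucc]).length + 1 := by
            simp
          constructor
          · rw [hlen2, e1, e4]
          · intro i
            have hi : (i : ℕ) < ((List.range k).flatMap fun i =>
                if ((IET.merge T hne).traj x i).castSucc = T.perm aK then [T.perm aK, aK]
                else [((IET.merge T hne).traj x i).castSucc]).length + 1 := by
              exact lt_of_lt_of_eq i.2 hlen2
            rw [List.get_eq_getElem]
            by_cases h1 : (i : ℕ) < ((List.range k).flatMap fun i =>
                if ((IET.merge T hne).traj x i).castSucc = T.perm aK then [T.perm aK, aK]
                else [((IET.merge T hne).traj x i).castSucc]).length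
            · rw [List.getElem_append_left h1]
              have h3 := ih2 ⟨i, h1⟩
              rw [List.get_eq_getElem] at h3
              exact h3
            · have h2 : (i:ℕ) = ((List.range k).flatMap fun i =>
                  if ((IET.merge T hne).traj x i).castSucc = T.perm aK then [T.perm aK, aK]
                  else [((IET.merge T hne).traj x i).castSucc]).length := by omega
              have hgoal : (((List.range k).flatMap fun i =>
                  if ((IET.merge T hne).traj x i).castSucc = T.perm aK then [T.perm aK, aK]
                  else [((IET.merge T hne).traj x i).castSucc])
                  ++ [((IET.merge T hne).traj x k).castSucc])[(i:ℕ)]'(by exact lt_of_lt_of_eq hi hlen2.symm) = ((IET.merge T hne).traj x k).castSucc := by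
                rw [List.getElem_append_right (by omega)]
                simp [h2]
              have htraj : T.traj x (((List.range k).flatMap fun i =>
                  if ((IET.merge T hne).traj x i).castSucc = T.perm aK then [T.perm aK, aK]
                  else [((IET.merge T hne).traj x i).castSucc]).length)
                  = ((IET.merge T hne).traj x k).castSucc := by
                show T.idx _ = _
                rw [ih1]
                exact T.idx_eq hyT
              have h5 : T.traj x (i:ℕ) = ((IET.merge T hne).traj x k).castSucc := by
                rw [h2]; exact htraj
              exact hgoal.trans h5.symm
    exact (key m).2
end

section
/- A nonempty word w over an ordered alphabet A = {a_1 < … < a_k} is π-clustering for a permutation π of A if and only if the language L(w^ω) of all finite factors of the periodic infinite word w^ω is ordered alsinic with respect to the orders <_π (on left extensions) and <_A (on right extensions). -/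
/-- The language of the periodic infinite word `w^ω`: all factors of powers of `w`. -/
def perLang {A : Type*} (w : List A) : Set (List A) :=
  { v | ∃ m : ℕ, v <:+: wordPow w m }

section

variable {α : Type*}

theorem List.filterMap_getElem?_range (l : List α) :
    (List.range l.length).filterMap (fun i => l[i]?) = l := by
  induction l with
  | nil => rfl
  | cons a l ih => simp [List.range_succ_eq_map, List.filterMap_map, ih]

section LinearOrder

variable [LinearOrder α]

theorem List.pairwise_iff_forall_lt_of_pairwise_le {l : List α}
    {P : α → α → Prop} (hl : l.Pairwise (· ≤ ·)) (hP : ∀ x ∈ l, P x x) :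
    l.Pairwise P ↔ ∀ x ∈ l, ∀ y ∈ l, x < y → P x y := by
  constructor
  · intro h
    have h' : l.Pairwise (fun x y => x < y → P x y) := h.imp fun {x y} hxy (_ : x < y) => hxy
    refine h'.forall_of_forall_of_flip (fun x _ hx => absurd hx (lt_irrefl x)) ?_
    exact hl.imp fun hxy hyx => absurd hxy (not_le.mpr hyx)
  · intro h
    refine hl.imp_of_mem fun hx hy hxy => ?_
    rcases hxy.eq_or_lt with rfl | hlt
    · exact hP _ hx
    · exact h _ hx _ hy hlt

theorem List.lt_of_append_singleton_prefix {v r s : List α} {b d : α}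
    (hb : v ++ [b] <+: r) (hd : v ++ [d] <+: s) (h : b < d) : r < s := by
  obtain ⟨r', rfl⟩ := hb
  obtain ⟨s', rfl⟩ := hd
  simpa only [List.append_assoc, List.singleton_append] using
    List.append_left_lt (List.cons_lt_cons_iff.mpr (Or.inl h))

theorem List.exists_append_singleton_prefix_of_lt {r s : List α}
    (hlen : r.length = s.length) (h : r < s) :
    ∃ v b d, v ++ [b] <+: r ∧ v ++ [d] <+: s ∧ b < d := by
  replace h : List.Lex (· < ·) r s := h
  induction h with
  | nil => simp at hlen
  | @rel a r b s hab => exact ⟨[], a, b, ⟨r, rfl⟩, ⟨s, rfl⟩, hab⟩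
  | @cons a r s _ ih =>
    obtain ⟨v, b, d, ⟨r', hr'⟩, ⟨s', hs'⟩, hbd⟩ := ih (by simpa using hlen)
    exact ⟨a :: v, b, d, ⟨r', by simp [← hr']⟩, ⟨s', by simp [← hs']⟩, hbd⟩

end LinearOrder

section PeriodicLanguage

theorem length_wordPow (u : List α) (m : ℕ) : (wordPow u m).length = m * u.length := by
  induction m with
  | zero => simp [wordPow]
  | succ m ih => simp [wordPow, ih, Nat.succ_mul, Nat.add_comm]

theorem getElem?_wordPow (u : List α) {m k : ℕ} (hk : k < m * u.length) :
    (wordPow u m)[k]? = u[k % u.length]? := by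
  induction m generalizing k with
  | zero => simp at hk
  | succ m ih =>
    rw [wordPow]
    rcases lt_or_ge k u.length with hku | hku
    · rw [List.getElem?_append_left hku, Nat.mod_eq_of_lt hku]
    · rw [List.getElem?_append_right hku, ih (by rw [Nat.succ_mul] at hk; omega),
        ← Nat.mod_eq_sub_mod hku]

theorem wordPow_nil (m : ℕ) : wordPow ([] : List α) m = [] := by
  induction m with
  | zero => rfl
  | succ m ih => simpa [wordPow] using ih

theorem perLang_nil : perLang ([] : List α) = {[]} := by
  ext v
  simp [perLang, wordPow_nil]

theorem mem_perLang_of_infix {w u v : List α} (huv : u <:+: v) (hv : v ∈ perLang w) :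
    u ∈ perLang w :=
  let ⟨m, hm⟩ := hv
  ⟨m, huv.trans hm⟩

theorem mem_perLang_iff {w : List α} (hw : w ≠ []) {v : List α} :
    v ∈ perLang w ↔ ∃ p, ∀ t (ht : t < v.length), w[(p + t) % w.length]? = some v[t] := by
  have hn : 0 < w.length := List.length_pos_iff.mpr hw
  constructor
  · rintro ⟨m, s, s', hv⟩
    refine ⟨s.length, fun t ht => ?_⟩
    have hlt : s.length + t < m * w.length := by
      rw [← length_wordPow, ← hv]
      simp only [List.length_append]
      omega
    rw [← getElem?_wordPow w hlt, ← hv, List.append_assoc,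
      List.getElem?_append_right (by omega), Nat.add_sub_cancel_left,
      List.getElem?_append_left ht, List.getElem?_eq_getElem ht]
  · rintro ⟨p, hp⟩
    refine ⟨p + v.length, ?_⟩
    have hpre : v <+: (wordPow w (p + v.length)).drop p := by
      refine List.prefix_iff_getElem?.mpr fun t ht => ?_
      rw [List.getElem?_drop, getElem?_wordPow w (by nlinarith), hp t ht]
    exact hpre.isInfix.trans (List.drop_suffix _ _).isInfix

end PeriodicLanguage

section Rotations

variable {w : List α}

theorem getLast?_rotate (hw : w ≠ []) (i : ℕ) :
    (w.rotate i).getLast? = w[(w.length - 1 + i) % w.length]? := by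
  rw [List.getLast?_eq_getElem?, List.length_rotate,
    List.getElem?_rotate (Nat.sub_lt (List.length_pos_iff.mpr hw) one_pos)]

theorem exists_rotate_of_cons_mem_perLang (hw : w ≠ []) {a : α} {z : List α}
    (hz : z.length ≤ w.length) (h : a :: z ∈ perLang w) :
    ∃ i < w.length, z <+: w.rotate i ∧ (w.rotate i).getLast? = some a := by
  have hn : 0 < w.length := List.length_pos_iff.mpr hw
  obtain ⟨p, hp⟩ := (mem_perLang_iff hw).mp h
  refine ⟨(p + 1) % w.length, Nat.mod_lt _ hn, ?_, ?_⟩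
  · refine List.prefix_iff_getElem?.mpr fun t ht => ?_
    have hzt := hp (t + 1) (by simpa)
    rw [List.getElem_cons_succ] at hzt
    rw [List.getElem?_rotate (by omega), Nat.add_mod_mod, ← hzt,
      show t + (p + 1) = p + (t + 1) by omega]
  · have ha := hp 0 (by simp)
    rw [List.getElem_cons_zero] at ha
    rw [getLast?_rotate hw, Nat.add_mod_mod, ← ha,
      show w.length - 1 + (p + 1) = p + 0 + w.length by omega, Nat.add_mod_right]

theorem cons_mem_perLang_of_prefix_rotate (hw : w ≠ []) {a : α} {z : List α} {i : ℕ}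
    (hz : z <+: w.rotate i) (ha : (w.rotate i).getLast? = some a) : a :: z ∈ perLang w := by
  have hn : 0 < w.length := List.length_pos_iff.mpr hw
  refine (mem_perLang_iff hw).mpr ⟨w.length - 1 + i, fun t ht => ?_⟩
  cases t with
  | zero => simpa [getLast?_rotate hw] using ha
  | succ t =>
    have htz : t < z.length := by simpa using ht
    have htw : t < w.length := by
      have := hz.length_le
      simp only [List.length_rotate] at this
      omega
    rw [List.getElem_cons_succ, ← List.prefix_iff_getElem?.mp hz t htz, List.getElem?_rotate htw,
      show w.length - 1 + i + (t + 1) = t + i + w.length by omega, Nat.add_mod_right]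

theorem getElem?_eq_of_append_singleton_mem_perLang (hw : w ≠ []) {v : List α} {b : α}
    (hv : w.length ≤ v.length) (h : v ++ [b] ∈ perLang w) :
    v[v.length - w.length]? = some b := by
  have hn : 0 < w.length := List.length_pos_iff.mpr hw
  obtain ⟨p, hp⟩ := (mem_perLang_iff hw).mp h
  have hb := hp v.length (by simp)
  have hv' := hp (v.length - w.length) (by simp)
  rw [show p + v.length = p + (v.length - w.length) + w.length by omega, Nat.add_mod_right,
    hv'] at hb
  rw [List.getElem_append_left (by omega)] at hb
  rw [List.getElem?_eq_getElem (by omega)]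
  simpa using hb

theorem filterMap_getLast?_rotations (w : List α) :
    ((List.range w.length).map w.rotate).filterMap List.getLast? = w.rotate (w.length - 1) := by
  rcases eq_or_ne w [] with rfl | hw
  · rfl
  rw [List.filterMap_map]
  conv_rhs => rw [← List.filterMap_getElem?_range (w.rotate (w.length - 1)), List.length_rotate]
  refine List.filterMap_congr fun i hi => ?_
  rw [List.mem_range] at hi
  rw [Function.comp_apply, getLast?_rotate hw, List.getElem?_rotate hi, Nat.add_comm]

end Rotations

section BurrowsWheeler

variable [LinearOrder α]

theorem bwt_perm (w : List α) : (bwt w).Perm w := by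
  have hsort : (bwt w).Perm (((List.range w.length).map w.rotate).filterMap List.getLast?) :=
    (Multiset.coe_eq_coe.mp (Multiset.sort_eq _ _)).filterMap _
  rw [filterMap_getLast?_rotations] at hsort
  exact hsort.trans (List.rotate_perm _ _)

theorem pairwise_bwt_iff (w : List α) {R : α → α → Prop} (hR : ∀ a, R a a) :
    (bwt w).Pairwise R ↔ ∀ i < w.length, ∀ j < w.length, w.rotate i < w.rotate j →
      ∀ a, (w.rotate i).getLast? = some a →
        ∀ c, (w.rotate j).getLast? = some c → R a c := by
  rw [bwt, List.pairwise_filterMap,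
    List.pairwise_iff_forall_lt_of_pairwise_le (Multiset.pairwise_sort _ _)]
  · simp only [Multiset.mem_sort, Multiset.mem_coe, List.mem_map, List.mem_range]
    constructor
    · intro h i hi j hj
      exact h _ ⟨i, hi, rfl⟩ _ ⟨j, hj, rfl⟩
    · rintro h _ ⟨i, hi, rfl⟩ _ ⟨j, hj, rfl⟩
      exact h i hi j hj
  · intro r _ a ha c hc
    cases ha.symm.trans hc
    exact hR a

end BurrowsWheeler

section Clustering

variable [LinearOrder α] [Fintype α]

def clusterWord (π : Equiv.Perm α) (w : List α) : List α :=
  ((Finset.univ.sort (· ≤ ·)).map (fun a => List.replicate (w.count (π a)) (π a))).flatten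

theorem count_clusterWord (π : Equiv.Perm α) (w : List α) (x : α) :
    (clusterWord π w).count x = w.count x := by
  rw [clusterWord, List.count_flatten, List.map_map,
    ((Finset.sort_perm_toList _ _).map _).sum_eq, Finset.sum_map_toList,
    Finset.sum_eq_single (π.symm x)]
  · simp
  · intro a _ ha
    have hax : π a ≠ x := fun h => ha (by rw [← h, Equiv.symm_apply_apply])
    simp [List.count_replicate, hax]
  · simp

theorem pairwise_clusterWord (π : Equiv.Perm α) (w : List α) :
    (clusterWord π w).Pairwise (fun x y => π.symm x ≤ π.symm y) := by
  rw [clusterWord, List.pairwise_flatten, List.pairwise_map]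
  refine ⟨?_, (Finset.pairwise_sort _ _).imp fun hab x hx y hy => ?_⟩
  · simp only [List.mem_map]
    rintro _ ⟨a, -, rfl⟩
    exact List.pairwise_replicate.mpr (Or.inr le_rfl)
  · rw [List.eq_of_mem_replicate hx, List.eq_of_mem_replicate hy]
    simpa using hab

theorem clustering_iff_pairwise_bwt (π : Equiv.Perm α) (w : List α) :
    Clustering π w ↔ (bwt w).Pairwise (fun x y => π.symm x ≤ π.symm y) := by
  change bwt w = clusterWord π w ↔ _
  refine ⟨fun h => h ▸ pairwise_clusterWord π w, fun h => ?_⟩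
  refine List.Perm.eq_of_pairwise (fun x y _ _ hxy hyx => π.symm.injective (le_antisymm hxy hyx))
    h (pairwise_clusterWord π w) ?_
  exact List.perm_iff_count.mpr fun x => by rw [(bwt_perm w).count_eq, count_clusterWord]

end Clustering

end

theorem clustering_iff_ordered_alsinic_general {A : Type*} [LinearOrder A] [Fintype A]
    (w : List A) (π : Equiv.Perm A) :
    Clustering π w ↔
      ∀ v ∈ perLang w, ∀ a b c d : A,
        (a :: (v ++ [b])) ∈ perLang w → (c :: (v ++ [d])) ∈ perLang w →
        π.symm a < π.symm c → b ≤ d := by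
  rcases eq_or_ne w [] with rfl | hw
  · simp [Clustering, bwt, perLang_nil]
  rw [clustering_iff_pairwise_bwt, pairwise_bwt_iff w fun a => le_refl (π.symm a)]
  constructor
  · intro hsorted v _ a b c d hab hcd hac
    rcases lt_or_ge v.length w.length with hshort | hlong
    · obtain ⟨i, hi, hbi, hai⟩ := exists_rotate_of_cons_mem_perLang hw (by simpa) hab
      obtain ⟨j, hj, hdj, hcj⟩ := exists_rotate_of_cons_mem_perLang hw (by simpa) hcd
      by_contra! hdb
      have hji := List.lt_of_append_singleton_prefix hdj hbi hdb
      exact (hsorted j hj i hi hji c hcj a hai).not_gt hac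
    · have hb := getElem?_eq_of_append_singleton_mem_perLang hw hlong
        (mem_perLang_of_infix (List.suffix_cons a _).isInfix hab)
      have hd := getElem?_eq_of_append_singleton_mem_perLang hw hlong
        (mem_perLang_of_infix (List.suffix_cons c _).isInfix hcd)
      exact (Option.some_injective _ (hb.symm.trans hd)).le
  · intro halsinic i _ j _ hij a ha c hc
    obtain ⟨v, b, d, hbi, hdj, hbd⟩ :=
      List.exists_append_singleton_prefix_of_lt (by simp) hij
    have hab := cons_mem_perLang_of_prefix_rotate hw hbi ha
    have hcd := cons_mem_perLang_of_prefix_rotate hw hdj hc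
    have hv : v ∈ perLang w := mem_perLang_of_infix ⟨[a], [b], rfl⟩ hab
    by_contra! hca
    exact (halsinic v hv c d a b hcd hab hca).not_gt hbd

/-- A nonempty word `w` is `π`-clustering if and only if the language of `w^ω` is ordered
alsinic with respect to `<_π` (on left extensions, where `a <_π c ↔ π⁻¹(a) < π⁻¹(c)`) and
`<_A` (on right extensions): for every factor `v` and edges `(a,b)`, `(c,d)` of its
extension graph, `a <_π c` implies `b ≤ d`. -/
theorem clustering_iff_ordered_alsinic {A : Type*} [LinearOrder A] [Fintype A]
    (w : List A) (hw : w ≠ []) (π : Equiv.Perm A) :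
    Clustering π w ↔
      ∀ v ∈ perLang w, ∀ a b c d : A,
        (a :: (v ++ [b])) ∈ perLang w → (c :: (v ++ [d])) ∈ perLang w →
        π.symm a < π.symm c → b ≤ d :=
  clustering_iff_ordered_alsinic_general w π
end

section
/- Let w be a primitive word over an alphabet A, let a ∈ A, and let b be a letter distinct from a (with b either in A or a new letter not in A). Then α_{a,b}(w) is primitive, where α_{a,b} is the monoid morphism fixing every letter c ≠ a and sending a to the two-letter word ab. -/
/-!
If `α_{a,b}(w) = v^m` with `m ≥ 1`, then `v` does not end in `a`, because no image of
`α_{a,b}` does: its last letter is `b` or a letter other than `a`. A prefix of an image that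
does not end in `a` cuts the image between the blocks `ab` and `c`, so `v = α_{a,b}(u)` for
some `u`. Since every block starts with the letter it codes, `α_{a,b}` is injective, and
`α_{a,b}(w) = α_{a,b}(u^m)` gives `w = u^m`.
-/

theorem wordPow_succ' {A : Type*} (u : List A) (n : ℕ) :
    wordPow u (n + 1) = wordPow u n ++ u := by
  induction n with
  | zero => simp [wordPow]
  | succ n ih => rw [wordPow, ih, ← List.append_assoc, ← ih, wordPow]

theorem List.flatMap_wordPow {A B : Type*} (σ : A → List B) (u : List A) (n : ℕ) :
    (wordPow u n).flatMap σ = wordPow (u.flatMap σ) n := by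
  induction n with
  | zero => rfl
  | succ n ih => simp [wordPow, ih]

theorem List.flatMap_injective_of_head?_eq {A : Type*} {σ : A → List A}
    (hσ : ∀ c, (σ c).head? = some c) : Function.Injective (List.flatMap σ) := by
  have hσ_ne : ∀ c, σ c ≠ [] := fun c h => by simpa [h] using hσ c
  intro u u' h
  induction u generalizing u' with
  | nil => cases u' with
    | nil => rfl
    | cons c _ => simp [hσ_ne] at h
  | cons c u ih => cases u' with
    | nil => simp [hσ_ne] at h
    | cons c' u' =>
      simp only [List.flatMap_cons] at h
      have hc : c = c' := by simpa [hσ_ne, hσ] using congrArg List.head? h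
      subst hc
      rw [ih (List.append_cancel_left h)]

theorem List.getLast?_ne_of_cons {A : Type*} {c a : A} {x : List A}
    (h : (c :: x).getLast? ≠ some a) : x.getLast? ≠ some a := by
  rintro hx
  simp [List.getLast?_cons, hx] at h

section Alpha

variable {α : Type*} [DecidableEq α] (a b : α)

def alpha (w : List α) : List α :=
  w.flatMap fun c => if c = a then [a, b] else [c]

theorem alpha_cons (c : α) (u : List α) :
    alpha a b (c :: u) = c :: ((if c = a then [b] else []) ++ alpha a b u) := by
  by_cases hc : c = a <;> simp [alpha, hc]

theorem alpha_injective : Function.Injective (alpha a b) :=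
  List.flatMap_injective_of_head?_eq fun c => by split_ifs with hc <;> simp [hc]

theorem alpha_wordPow (u : List α) (n : ℕ) : alpha a b (wordPow u n) = wordPow (alpha a b u) n :=
  List.flatMap_wordPow _ u n

variable {a b}

theorem getLast?_alpha_ne (hab : a ≠ b) (u : List α) : (alpha a b u).getLast? ≠ some a := by
  induction u using List.reverseRecOn with
  | nil => simp [alpha]
  | append_singleton u c _ =>
    by_cases hc : c = a <;> simp [alpha, hc, Ne.symm hab]

theorem exists_alpha_eq_of_alpha_eq_append {u x y : List α} (h : alpha a b u = x ++ y)
    (hx : x.getLast? ≠ some a) : ∃ u₁, alpha a b u₁ = x := by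
  induction u generalizing x with
  | nil => exact ⟨[], (List.append_eq_nil_iff.mp h.symm).1.symm⟩
  | cons c u ih =>
    obtain _ | ⟨d, x⟩ := x
    · exact ⟨[], rfl⟩
    rw [alpha_cons, List.cons_append, List.cons.injEq] at h
    obtain ⟨rfl, h⟩ := h
    by_cases hc : c = a
    · subst hc
      obtain _ | ⟨e, x⟩ := x
      · exact absurd rfl hx
      rw [if_pos rfl, List.singleton_append, List.cons_append, List.cons.injEq] at h
      obtain ⟨rfl, h⟩ := h
      obtain ⟨u₁, hu₁⟩ := ih h (List.getLast?_ne_of_cons (List.getLast?_ne_of_cons hx))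
      exact ⟨c :: u₁, by rw [alpha_cons, if_pos rfl, hu₁]; rfl⟩
    · rw [if_neg hc, List.nil_append] at h
      obtain ⟨u₁, hu₁⟩ := ih h (List.getLast?_ne_of_cons hx)
      exact ⟨c :: u₁, by rw [alpha_cons, if_neg hc, hu₁]; rfl⟩

end Alpha

/-- The image of a primitive word under the morphism `α_{a,b} : a ↦ ab` (fixing all other
letters) is primitive. -/
theorem primitive_alpha {α : Type*} [DecidableEq α] (w : List α) (hw : Primitive w)
    (a b : α) (hab : a ≠ b) :
    Primitive (w.flatMap fun c => if c = a then [a, b] else [c]) := by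
  intro v m hvm
  change alpha a b w = wordPow v m at hvm
  obtain _ | m := m
  · exact hw [] 0 (alpha_injective a b hvm)
  · obtain ⟨u, rfl⟩ : ∃ u, alpha a b u = v := by
      refine exists_alpha_eq_of_alpha_eq_append hvm fun hv => getLast?_alpha_ne hab w ?_
      rw [hvm, wordPow_succ', List.getLast?_append, hv, Option.some_or]
    exact hw u _ (alpha_injective a b (by rw [hvm, alpha_wordPow]))
end
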